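/- Let u ∈ ℍ be imaginary (zero real part) and let x be a paravector. Then: (i) uk = −ku*; (ii) xk = k x̄; (iii) the dot product (−uk)·x equals 0 if and only if ux = xu*, and in that case the cross product (−uk) × x equals ux; (iv) if moreover |u| = 1 and ux = xu*, then for every real θ one has exp(uθ) x = x exp(u*θ) = exp(uθ/2) x exp(u*θ/2). -/

import Mathlib

/-
Parts (i)–(iii) are coordinate identities for imaginary `u` and paravector `x`, the key ones being
`u x − x u* = 2 ((−uk)·x) k` and `(−uk) × x = (u x + x u*) / 2`; since `k ≠ 0`, the first gives
(iii). For (iv), `u² = −1` makes `θ ↦ exp(uθ)` a one-parameter group, and `u x = x u*` lets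
`exp(uθ)` pass through `x` as `exp(u*θ)`; writing `exp(uθ) = exp(uθ/2) exp(uθ/2)` and moving one
factor across `x` gives the symmetric form.
-/

open Quaternion

noncomputable section

/-- The involution `q* = a + bi + cj - dk` on quaternions (Clifford reversion). -/
def qstar (q : ℍ[ℝ]) : ℍ[ℝ] := ⟨q.re, q.imI, q.imJ, -q.imK⟩

/-- The involution `q' = a - bi - cj + dk` on quaternions. -/
def qprime (q : ℍ[ℝ]) : ℍ[ℝ] := ⟨q.re, -q.imI, -q.imJ, q.imK⟩

/-- A paravector is an element of `ℝ + ℝi + ℝj`, i.e. a quaternion with zero `k`-component. -/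
def IsParavector (q : ℍ[ℝ]) : Prop := q.imK = 0

/-- The quaternion `k`. -/
def qk : ℍ[ℝ] := ⟨0, 0, 0, 1⟩

/-- A quaternionic spinor: a pair `(ξ, η) ≠ (0,0)` with `ξ * conj η` a paravector. -/
def IsSpinor (κ : ℍ[ℝ] × ℍ[ℝ]) : Prop := κ ≠ 0 ∧ IsParavector (κ.1 * star κ.2)

/-- The bracket `{κ₁, κ₂} = ξ₁* η₂ − η₁* ξ₂`. -/
def bracket (κ₁ κ₂ : ℍ[ℝ] × ℍ[ℝ]) : ℍ[ℝ] := qstar κ₁.1 * κ₂.2 - qstar κ₁.2 * κ₂.1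

/-- Right multiplication `κ x = (ξ x, η x)`. -/
def rmul (κ : ℍ[ℝ] × ℍ[ℝ]) (x : ℍ[ℝ]) : ℍ[ℝ] × ℍ[ℝ] := (κ.1 * x, κ.2 * x)

/-- The complementary pair `κ̌ = (η', −ξ')`. -/
def qcheck (κ : ℍ[ℝ] × ℍ[ℝ]) : ℍ[ℝ] × ℍ[ℝ] := (qprime κ.2, -qprime κ.1)

/-- The real inner product on `ℍ²`: `⟨κ₁, κ₂⟩ = Re (ξ₁ ξ̄₂ + η₁ η̄₂)`. -/
def qinner (κ₁ κ₂ : ℍ[ℝ] × ℍ[ℝ]) : ℝ := (κ₁.1 * star κ₂.1 + κ₁.2 * star κ₂.2).re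

/-- The squared norm `|κ|² = |ξ|² + |η|²` on `ℍ²`. -/
def qnsq (κ : ℍ[ℝ] × ℍ[ℝ]) : ℝ := Quaternion.normSq κ.1 + Quaternion.normSq κ.2

/-- The dot product of paravectors: `v · w = Re (v w̄)`. -/
def pdot (v w : ℍ[ℝ]) : ℝ := (v * star w).re

/-- The cross product of paravectors: `v × w = (v w̄ − w v̄) k / 2`. -/
def pcross (v w : ℍ[ℝ]) : ℍ[ℝ] := (2 : ℝ)⁻¹ • ((v * star w - w * star v) * qk)

/-- The quaternionic exponential `exp (u θ) = cos θ + (sin θ) u` for `u` unit imaginary. -/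
def qexp (u : ℍ[ℝ]) (θ : ℝ) : ℍ[ℝ] := ((Real.cos θ : ℝ) : ℍ[ℝ]) + Real.sin θ • u

@[simp] lemma re_qk : qk.re = 0 := rfl
@[simp] lemma imI_qk : qk.imI = 0 := rfl
@[simp] lemma imJ_qk : qk.imJ = 0 := rfl
@[simp] lemma imK_qk : qk.imK = 1 := rfl
@[simp] lemma re_qstar (q : ℍ[ℝ]) : (qstar q).re = q.re := rfl
@[simp] lemma imI_qstar (q : ℍ[ℝ]) : (qstar q).imI = q.imI := rfl
@[simp] lemma imJ_qstar (q : ℍ[ℝ]) : (qstar q).imJ = q.imJ := rfl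
@[simp] lemma imK_qstar (q : ℍ[ℝ]) : (qstar q).imK = -q.imK := rfl

lemma qk_ne_zero : qk ≠ 0 := fun h => by simpa using congrArg (·.imK) h

lemma mul_qk_eq_neg_qk_mul_qstar {u : ℍ[ℝ]} (hu : u.re = 0) : u * qk = -(qk * qstar u) := by
  ext <;> simp [re_mul, imI_mul, imJ_mul, imK_mul, hu]

lemma IsParavector.mul_qk {x : ℍ[ℝ]} (hx : IsParavector x) : x * qk = qk * star x := by
  rw [IsParavector] at hx
  ext <;> simp [re_mul, imI_mul, imJ_mul, imK_mul, hx]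

lemma mul_sub_mul_qstar_eq_smul_qk {u x : ℍ[ℝ]} (hu : u.re = 0) (hx : IsParavector x) :
    u * x - x * qstar u = (2 * pdot (-(u * qk)) x) • qk := by
  rw [IsParavector] at hx
  ext <;> simp [pdot, re_mul, imI_mul, imJ_mul, imK_mul, hu, hx] <;> ring

lemma pcross_neg_mul_qk {u x : ℍ[ℝ]} (hu : u.re = 0) (hx : IsParavector x) :
    pcross (-(u * qk)) x = (2 : ℝ)⁻¹ • (u * x + x * qstar u) := by
  rw [IsParavector] at hx
  ext <;> simp [pcross, re_mul, imI_mul, imJ_mul, imK_mul, hu, hx] <;> ring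

lemma mul_self_eq_neg_one {u : ℍ[ℝ]} (hu : u.re = 0) (hn : normSq u = 1) : u * u = -1 := by
  rw [← sq, sq_eq_neg_normSq.mpr hu, hn, coe_one]

lemma qexp_add {u : ℍ[ℝ]} (hu : u * u = -1) (s t : ℝ) :
    qexp u (s + t) = qexp u s * qexp u t := by
  have coe_eq_smul_one (r : ℝ) : (r : ℍ[ℝ]) = r • 1 := Algebra.algebraMap_eq_smul_one r
  simp only [qexp, coe_eq_smul_one, add_mul, mul_add, smul_mul_smul, one_mul, mul_one, hu,
    Real.cos_add, Real.sin_add]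
  module

lemma qexp_mul_of_mul_eq_mul {u v x : ℍ[ℝ]} (h : u * x = x * v) (θ : ℝ) :
    qexp u θ * x = x * qexp v θ := by
  rw [qexp, qexp, add_mul, mul_add, smul_mul_assoc, h, mul_smul_comm, coe_commutes]

/-- For `u` imaginary and `x` a paravector:
(i) `uk = −ku*`; (ii) `xk = k x̄`;
(iii) `(−uk)·x = 0` iff `ux = xu*`, and in that case `(−uk) × x = ux`;
(iv) if moreover `|u| = 1` and `ux = xu*` then for every real `θ`,
`exp(uθ) x = x exp(u*θ) = exp(uθ/2) x exp(u*θ/2)`. -/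
theorem quaternion_geometry_facts (u x : ℍ[ℝ]) (hu : u.re = 0) (hx : IsParavector x) :
    (u * qk = -(qk * qstar u)) ∧
    (x * qk = qk * star x) ∧
    (pdot (-(u * qk)) x = 0 ↔ u * x = x * qstar u) ∧
    (u * x = x * qstar u → pcross (-(u * qk)) x = u * x) ∧
    (Quaternion.normSq u = 1 → u * x = x * qstar u → ∀ θ : ℝ,
      qexp u θ * x = x * qexp (qstar u) θ ∧
      qexp u θ * x = qexp u (θ / 2) * x * qexp (qstar u) (θ / 2)) := by
  refine ⟨mul_qk_eq_neg_qk_mul_qstar hu, hx.mul_qk, ?_, fun h => ?_, fun hn h θ => ⟨?_, ?_⟩⟩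
  · rw [← sub_eq_zero (a := u * x), mul_sub_mul_qstar_eq_smul_qk hu hx, smul_eq_zero]
    simp [qk_ne_zero]
  · rw [pcross_neg_mul_qk hu hx, h, ← two_smul ℝ, smul_smul, inv_mul_cancel₀ two_ne_zero, one_smul]
  · exact qexp_mul_of_mul_eq_mul h θ
  · rw [mul_assoc, ← qexp_mul_of_mul_eq_mul h, ← mul_assoc,
      ← qexp_add (mul_self_eq_neg_one hu hn), add_halves]
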